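/- arXiv:1801.07673 — 5 statements merged into one kernel-verified Lean document; each statement's English description precedes it below -/
import Mathlib

section
/- Let p be a real number with 0 ≤ p < 1, let ε be a real number with 0 ≤ ε ≤ 1, and let d ≥ 1 be a natural number. Then Q(p, ε, d) attains its maximum value log d, i.e. Q(p, ε, d) = log d, if and only if ε/(1 − p) ≥ 1 − 1/d². -/
/-- The greatest natural number `m` with `1 ≤ m`, `(m : ℝ) ≤ √(1/(1 - ε/(1 - p)))`,
and `m ≤ d` (as a supremum in `ℕ`). -/
noncomputable def M (p ε : ℝ) (d : ℕ) : ℕ :=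
  sSup {m : ℕ | 1 ≤ m ∧ (m : ℝ) ≤ Real.sqrt (1 / (1 - ε / (1 - p))) ∧ m ≤ d}

/-- The one-shot entanglement transmission capacity of a harmonic clean model. -/
noncomputable def Q (p ε : ℝ) (d : ℕ) : ℝ :=
  if p < 1 - ε then Real.log (M p ε d) else Real.log d

/-! With `t = ε / (1 - p) ∈ [0, 1)`, `M p ε d = min d ⌊√(1 / (1 - t))⌋₊ ≥ 1`, so `log M = log d`
exactly when `d ≤ √(1 / (1 - t))`, i.e. `d² (1 - t) ≤ 1`. When `p ≥ 1 - ε`, `t ≥ 1` and both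
sides hold trivially. -/

theorem sSup_setOf_natCast_le_eq_min_floor (x : ℝ) (d : ℕ) :
    sSup {m : ℕ | 1 ≤ m ∧ (m : ℝ) ≤ x ∧ m ≤ d} = min d ⌊x⌋₊ := by
  have hset : {m : ℕ | 1 ≤ m ∧ (m : ℝ) ≤ x ∧ m ≤ d} = Set.Icc 1 (min d ⌊x⌋₊) := by
    ext m
    rcases lt_or_ge x 0 with hx | hx
    · simp only [Set.mem_ofPred_eq, Set.mem_Icc, Nat.floor_of_nonpos hx.le]
      constructor
      · rintro ⟨hm, hmx, -⟩
        linarith [(Nat.one_le_cast (α := ℝ)).2 hm]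
      · omega
    · simp only [Set.mem_ofPred_eq, Set.mem_Icc, le_min_iff, Nat.le_floor_iff hx]
      tauto
  rw [hset]
  rcases Nat.eq_zero_or_pos (min d ⌊x⌋₊) with h0 | hpos
  · rw [h0, Set.Icc_eq_empty (by omega), csSup_empty, bot_eq_zero]
  · exact csSup_Icc hpos

theorem M_eq_min_floor (p ε : ℝ) (d : ℕ) :
    M p ε d = min d ⌊√(1 / (1 - ε / (1 - p)))⌋₊ :=
  sSup_setOf_natCast_le_eq_min_floor _ d

theorem log_min_floor_eq_log_iff {x : ℝ} (hx : 1 ≤ x) {d : ℕ} (hd : 1 ≤ d) :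
    Real.log (min d ⌊x⌋₊ : ℕ) = Real.log d ↔ (d : ℝ) ≤ x := by
  have hfloor : 1 ≤ ⌊x⌋₊ := Nat.one_le_floor_iff x |>.2 hx
  have hmin : 1 ≤ min d ⌊x⌋₊ := le_min hd hfloor
  rw [Real.log_injOn_pos.eq_iff (Set.mem_Ioi.2 (Nat.cast_pos.2 hmin))
      (Set.mem_Ioi.2 (Nat.cast_pos.2 hd)), Nat.cast_inj,
    min_eq_left_iff, Nat.le_floor_iff (by linarith)]

theorem le_sqrt_one_div_one_sub_iff {x t : ℝ} (hx : 0 < x) (ht : t < 1) :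
    x ≤ √(1 / (1 - t)) ↔ 1 - 1 / x ^ 2 ≤ t := by
  have h1t : 0 < 1 - t := by linarith
  rw [Real.le_sqrt hx.le (by positivity), le_div_iff₀ h1t, sub_le_comm,
    le_div_iff₀ (by positivity)]
  constructor <;> intro h <;> nlinarith

theorem stmt_5_general (p ε : ℝ) (hp1 : p < 1) (hε0 : 0 ≤ ε)
    (d : ℕ) (hd : 1 ≤ d) :
    Q p ε d = Real.log d ↔ ε / (1 - p) ≥ 1 - 1 / (d : ℝ) ^ 2 := by
  have h1p : 0 < 1 - p := by linarith
  rw [ge_iff_le, Q]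
  split_ifs with hc
  · have ht0 : 0 ≤ ε / (1 - p) := div_nonneg hε0 h1p.le
    have ht1 : ε / (1 - p) < 1 := (div_lt_one h1p).2 (by linarith)
    have hs : 1 ≤ √(1 / (1 - ε / (1 - p))) :=
      Real.one_le_sqrt.2 ((one_le_div (by linarith)).2 (by linarith))
    rw [M_eq_min_floor, log_min_floor_eq_log_iff hs hd,
      le_sqrt_one_div_one_sub_iff (by positivity) ht1]
  · have ht : 1 ≤ ε / (1 - p) := (one_le_div h1p).2 (by linarith)
    have : 0 ≤ 1 / (d : ℝ) ^ 2 := by positivity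
    exact iff_of_true rfl (by linarith)

theorem stmt_5 (p ε : ℝ) (hp0 : 0 ≤ p) (hp1 : p < 1) (hε0 : 0 ≤ ε) (hε1 : ε ≤ 1)
    (d : ℕ) (hd : 1 ≤ d) :
    Q p ε d = Real.log d ↔ ε / (1 - p) ≥ 1 - 1 / (d : ℝ) ^ 2 :=
  stmt_5_general p ε hp1 hε0 d hd
end

section
/- Let p be a real number with 0 ≤ p ≤ 1, let ε be a real number with 0 ≤ ε ≤ 1, and let d ≥ 2 be a natural number. Then Q(p, ε, d) = 0 if and only if p < 1 − (4/3)·ε. -/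
/-! For a natural number `m`, `log m = 0` exactly when `m ≤ 1`. So for `p < 1 - ε` the capacity
vanishes iff `m = 2` does not fit under the bound `√(1/(1 - t))`, `t = ε/(1 - p)`, i.e. iff
`t < 3/4`, which is `p < 1 - 4ε/3`; for `p ≥ 1 - ε` it is `log d > 0`, and `p < 1 - 4ε/3` fails. -/

open Real

lemma Real.log_natCast_eq_zero_iff {n : ℕ} : log n = 0 ↔ n ≤ 1 := by
  rw [log_eq_zero]
  constructor
  · rintro (h | h | h) <;> norm_cast at h <;> omega
  · intro h
    interval_cases n <;> simp

lemma two_le_sSup_iff {x : ℝ} {d : ℕ} (hd : 2 ≤ d) :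
    2 ≤ sSup {m : ℕ | 1 ≤ m ∧ (m : ℝ) ≤ x ∧ m ≤ d} ↔ 2 ≤ x := by
  set S := {m : ℕ | 1 ≤ m ∧ (m : ℝ) ≤ x ∧ m ≤ d}
  have hS : BddAbove S := ⟨d, fun m hm => hm.2.2⟩
  constructor
  · intro h
    have hne : S.Nonempty := by
      by_contra hempty
      rw [Set.not_nonempty_iff_eq_empty.mp hempty, csSup_empty, bot_eq_zero] at h
      omega
    have hmem := Nat.sSup_mem hne hS
    calc (2 : ℝ) ≤ (sSup S : ℕ) := by exact_mod_cast h
      _ ≤ x := hmem.2.1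
  · intro h
    exact le_csSup hS ⟨by norm_num, by exact_mod_cast h, hd⟩

lemma log_M_eq_zero_iff {p ε : ℝ} {d : ℕ} (hd : 2 ≤ d) :
    log (M p ε d) = 0 ↔ √(1 / (1 - ε / (1 - p))) < 2 := by
  rw [Real.log_natCast_eq_zero_iff, ← not_le, M, ← two_le_sSup_iff hd]
  omega

lemma sqrt_one_div_one_sub_lt_two_iff {t : ℝ} (ht : t < 1) :
    √(1 / (1 - t)) < 2 ↔ t < 3 / 4 := by
  rw [sqrt_lt' two_pos, div_lt_iff₀ (sub_pos.mpr ht)]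
  constructor <;> intro <;> linarith

theorem stmt_6_general (p ε : ℝ) (hε0 : 0 ≤ ε)
    (d : ℕ) (hd : 2 ≤ d) :
    Q p ε d = 0 ↔ p < 1 - (4 / 3) * ε := by
  by_cases hpε : p < 1 - ε
  · have h1p : 0 < 1 - p := by linarith
    rw [Q, if_pos hpε, log_M_eq_zero_iff hd,
      sqrt_one_div_one_sub_lt_two_iff ((div_lt_one h1p).mpr (by linarith)), div_lt_iff₀ h1p]
    constructor <;> intro <;> linarith
  · rw [Q, if_neg hpε, Real.log_natCast_eq_zero_iff]
    constructor
    · omega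
    · intro h
      exact absurd (by linarith) hpε

theorem stmt_6 (p ε : ℝ) (hp0 : 0 ≤ p) (hp1 : p ≤ 1) (hε0 : 0 ≤ ε) (hε1 : ε ≤ 1)
    (d : ℕ) (hd : 2 ≤ d) :
    Q p ε d = 0 ↔ p < 1 - (4 / 3) * ε :=
  stmt_6_general p ε hε0 d hd
end

section
/- Let p be a real number with 0 ≤ p < 1, let ε be a real number with 0 ≤ ε ≤ 1, let d ≥ 1 be a natural number, and let k be a natural number with 1 ≤ k ≤ d. Then Q(p, ε, d) ≥ log k if and only if ε ≥ (1 − p)·(1 − 1/k²). -/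
theorem le_sSup_cast_le_iff {x : ℝ} {d k : ℕ} (hk1 : 1 ≤ k) (hkd : k ≤ d) :
    k ≤ sSup {m : ℕ | 1 ≤ m ∧ (m : ℝ) ≤ x ∧ m ≤ d} ↔ (k : ℝ) ≤ x := by
  set S := {m : ℕ | 1 ≤ m ∧ (m : ℝ) ≤ x ∧ m ≤ d}
  have hbdd : BddAbove S := ⟨d, fun m hm => hm.2.2⟩
  constructor
  · intro hk
    rcases S.eq_empty_or_nonempty with hS | hS
    · rw [hS, csSup_empty, bot_eq_zero] at hk
      omega
    · exact le_trans (by exact_mod_cast hk) (Nat.sSup_mem hS hbdd).2.1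
  · exact fun hkx => le_csSup hbdd ⟨hk1, hkx, hkd⟩

theorem mul_one_sub_one_div_sq_le_iff {a ε x : ℝ} (hx : 0 < x) :
    a * (1 - 1 / x ^ 2) ≤ ε ↔ x ^ 2 * (a - ε) ≤ a := by
  rw [← mul_le_mul_iff_of_pos_left (pow_pos hx 2)]
  field_simp
  constructor <;> intro h <;> linarith

theorem le_M_iff {p ε : ℝ} {d k : ℕ} (hp1 : p < 1) (hpε : p < 1 - ε) (hk1 : 1 ≤ k)
    (hkd : k ≤ d) : k ≤ M p ε d ↔ (1 - p) * (1 - 1 / (k : ℝ) ^ 2) ≤ ε := by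
  have h1p : 0 < 1 - p := by linarith
  have hk0 : (0 : ℝ) < k := by exact_mod_cast hk1
  have h1pε : 0 < 1 - p - ε := by linarith
  have hradicand : 1 / (1 - ε / (1 - p)) = (1 - p) / (1 - p - ε) := by
    field_simp
  rw [M, le_sSup_cast_le_iff hk1 hkd, hradicand, Real.le_sqrt' hk0,
    le_div_iff₀ h1pε, mul_one_sub_one_div_sq_le_iff hk0]

theorem stmt_8_general (p ε : ℝ) (hp1 : p < 1) (hε0 : 0 ≤ ε)
    (d : ℕ) (k : ℕ) (hk1 : 1 ≤ k) (hkd : k ≤ d) :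
    Q p ε d ≥ Real.log k ↔ ε ≥ (1 - p) * (1 - 1 / (k : ℝ) ^ 2) := by
  have hk0 : (0 : ℝ) < k := by exact_mod_cast hk1
  unfold Q
  split_ifs with hpε
  · have hM : (0 : ℝ) < M p ε d := by
      have := (le_M_iff hp1 hpε le_rfl (hk1.trans hkd)).2 (by simpa using hε0)
      exact_mod_cast this
    rw [ge_iff_le, Real.log_le_log_iff hk0 hM, Nat.cast_le, le_M_iff hp1 hpε hk1 hkd]
  · refine iff_of_true (Real.log_le_log hk0 (by exact_mod_cast hkd)) ?_
    calc (1 - p) * (1 - 1 / (k : ℝ) ^ 2) ≤ 1 - p :=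
          mul_le_of_le_one_right (by linarith) (sub_le_self _ (by positivity))
      _ ≤ ε := by linarith

theorem stmt_8 (p ε : ℝ) (hp0 : 0 ≤ p) (hp1 : p < 1) (hε0 : 0 ≤ ε) (hε1 : ε ≤ 1)
    (d : ℕ) (hd : 1 ≤ d) (k : ℕ) (hk1 : 1 ≤ k) (hkd : k ≤ d) :
    Q p ε d ≥ Real.log k ↔ ε ≥ (1 - p) * (1 - 1 / (k : ℝ) ^ 2) :=
  stmt_8_general p ε hp1 hε0 d k hk1 hkd
end

section
/- Let p, p' be real numbers with 0 ≤ p ≤ 1 and 0 ≤ p' ≤ 1, and let d, d' be natural numbers with d ≥ 2 and d' ≥ 2. If Q(p, ε, d) = Q(p', ε, d') for every real ε with 0 ≤ ε ≤ 1, then p = p'. (The capacities Q_ent^→(W; ε) indexed by ε determine the probability amplitude modulus |α₁| = √p of the causal relation A→B of an unknown harmonic clean model.) -/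
/-!
For `ε ≥ 0` the capacity vanishes exactly when `√(1/(1 - ε/(1-p))) < 2`, i.e. when
`ε < 3(1-p)/4`: below this threshold only `m = 1` is admissible in `M`, above it `m = 2` is
(and past `ε = 1 - p` the capacity is `log d > 0`). So the capacities for `ε ∈ [0, 1]` recover
the threshold `3(1-p)/4 ∈ [0, 3/4]`, and hence `p`.
-/

section NatSet

variable {s : ℝ} {d : ℕ}

lemma sSup_natSet_eq_one (hs1 : 1 ≤ s) (hs2 : s < 2) (hd : 1 ≤ d) :
    sSup {m : ℕ | 1 ≤ m ∧ (m : ℝ) ≤ s ∧ m ≤ d} = 1 := by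
  suffices hset : {m : ℕ | 1 ≤ m ∧ (m : ℝ) ≤ s ∧ m ≤ d} = {1} by
    rw [hset, csSup_singleton]
  ext m
  simp only [Set.mem_ofPred_eq, Set.mem_singleton_iff]
  constructor
  · rintro ⟨hm1, hms, -⟩
    have : (m : ℝ) < 2 := hms.trans_lt hs2
    norm_cast at this
    omega
  · rintro rfl
    exact ⟨le_rfl, by exact_mod_cast hs1, hd⟩

lemma two_le_sSup_natSet (hs : 2 ≤ s) (hd : 2 ≤ d) :
    2 ≤ sSup {m : ℕ | 1 ≤ m ∧ (m : ℝ) ≤ s ∧ m ≤ d} :=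
  le_csSup ⟨d, fun _ hm => hm.2.2⟩ ⟨one_le_two, by exact_mod_cast hs, hd⟩

end NatSet

section Threshold

variable {p ε : ℝ}

lemma one_le_sqrt_one_div_one_sub_div (hε : 0 ≤ ε) (hεp : ε < 1 - p) :
    1 ≤ √(1 / (1 - ε / (1 - p))) := by
  have hp : 0 < 1 - p := hε.trans_lt hεp
  have ht0 : 0 ≤ ε / (1 - p) := div_nonneg hε hp.le
  have ht1 : ε / (1 - p) < 1 := (div_lt_one hp).mpr hεp
  rw [Real.one_le_sqrt, le_div_iff₀ (by linarith)]
  linarith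

lemma sqrt_one_div_one_sub_div_lt_two_iff (hε : 0 ≤ ε) (hεp : ε < 1 - p) :
    √(1 / (1 - ε / (1 - p))) < 2 ↔ ε < 3 * (1 - p) / 4 := by
  have hp : 0 < 1 - p := hε.trans_lt hεp
  have hden : 0 < 1 - ε / (1 - p) := by
    linarith [(div_lt_one hp).mpr hεp]
  have hratio : ε / (1 - p) < 3 / 4 ↔ ε < 3 * (1 - p) / 4 := by
    rw [div_lt_iff₀ hp]
    constructor <;> intro h <;> linarith
  rw [Real.sqrt_lt' two_pos, div_lt_iff₀ hden, ← hratio]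
  constructor <;> intro h <;> linarith

end Threshold

lemma Q_eq_zero_iff {p ε : ℝ} {d : ℕ} (hε : 0 ≤ ε) (hd : 2 ≤ d) :
    Q p ε d = 0 ↔ ε < 3 * (1 - p) / 4 := by
  have log_pos_of_two_le {n : ℕ} (hn : 2 ≤ n) : 0 < Real.log n :=
    Real.log_pos (by exact_mod_cast hn)
  by_cases hεp : p < 1 - ε
  · replace hεp : ε < 1 - p := by linarith
    rw [Q, if_pos (by linarith)]
    constructor
    · intro hQ
      by_contra hge
      have hs : 2 ≤ √(1 / (1 - ε / (1 - p))) :=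
        not_lt.mp ((sqrt_one_div_one_sub_div_lt_two_iff hε hεp).not.mpr hge)
      exact (log_pos_of_two_le (two_le_sSup_natSet hs hd)).ne' hQ
    · intro hlt
      rw [M, sSup_natSet_eq_one (one_le_sqrt_one_div_one_sub_div hε hεp)
        ((sqrt_one_div_one_sub_div_lt_two_iff hε hεp).mpr hlt) (by omega)]
      simp
  · rw [Q, if_neg hεp]
    exact iff_of_false (log_pos_of_two_le hd).ne' (by linarith)

lemma eq_of_forall_mem_Icc_lt_iff {a b : ℝ} (ha0 : 0 ≤ a) (ha1 : a ≤ 1) (hb0 : 0 ≤ b)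
    (h : ∀ ε ∈ Set.Icc (0 : ℝ) 1, ε < a ↔ ε < b) : a = b := by
  rcases lt_trichotomy a b with hab | hab | hab
  · exact absurd ((h a ⟨ha0, ha1⟩).mpr hab) (lt_irrefl a)
  · exact hab
  · exact absurd ((h b ⟨hb0, hab.le.trans ha1⟩).mp hab) (lt_irrefl b)

theorem stmt_10_general (p p' : ℝ) (hp0 : 0 ≤ p) (hp1 : p ≤ 1) (hp'1 : p' ≤ 1)
    (d d' : ℕ) (hd : 2 ≤ d) (hd' : 2 ≤ d')
    (h : ∀ ε : ℝ, 0 ≤ ε → ε ≤ 1 → Q p ε d = Q p' ε d') :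
    p = p' := by
  have hthreshold : 3 * (1 - p) / 4 = 3 * (1 - p') / 4 := by
    refine eq_of_forall_mem_Icc_lt_iff (by linarith) (by linarith) (by linarith) ?_
    rintro ε ⟨hε0, hε1⟩
    rw [← Q_eq_zero_iff hε0 hd, ← Q_eq_zero_iff hε0 hd', h ε hε0 hε1]
  linarith

theorem stmt_10 (p p' : ℝ) (hp0 : 0 ≤ p) (hp1 : p ≤ 1) (hp'0 : 0 ≤ p') (hp'1 : p' ≤ 1)
    (d d' : ℕ) (hd : 2 ≤ d) (hd' : 2 ≤ d')
    (h : ∀ ε : ℝ, 0 ≤ ε → ε ≤ 1 → Q p ε d = Q p' ε d') :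
    p = p' :=
  stmt_10_general p p' hp0 hp1 hp'1 d d' hd hd' h
end

section
/- Let p be a real number with 0 ≤ p ≤ 1 and let d ≥ 2 be a natural number. Then Q(p, ε, d) > 0 if and only if ε ≥ (3/4)·(1 − p), for every real ε with 0 ≤ ε ≤ 1. In particular, whenever p ≥ 1 − (4/3)·ε there is a strictly positive one-shot entanglement transmission capacity in the direction A→B. -/
/- For `p < 1 - ε`, `log M > 0` means `M ≥ 2`, i.e. `4 ≤ 1/(1 - ε/(1 - p)) = (1 - p)/(1 - p - ε)`,
which rearranges to `ε ≥ (3/4)(1 - p)`. For `p ≥ 1 - ε` both sides hold: `log d > 0`, and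
`ε ≥ 1 - p` already exceeds the threshold. -/

lemma le_sSup_bounded_iff {r : ℝ} {d k : ℕ} (hr : 1 ≤ r) (hd : 1 ≤ d) (hk : 1 ≤ k) :
    k ≤ sSup {m : ℕ | 1 ≤ m ∧ (m : ℝ) ≤ r ∧ m ≤ d} ↔ (k : ℝ) ≤ r ∧ k ≤ d := by
  set S := {m : ℕ | 1 ≤ m ∧ (m : ℝ) ≤ r ∧ m ≤ d}
  have hbdd : BddAbove S := ⟨d, fun _ hm => hm.2.2⟩
  have hone : 1 ∈ S := ⟨le_rfl, by exact_mod_cast hr, hd⟩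
  obtain ⟨-, hsup_r, hsup_d⟩ : sSup S ∈ S := Nat.sSup_mem ⟨1, hone⟩ hbdd
  constructor
  · intro hks
    exact ⟨le_trans (by exact_mod_cast hks) hsup_r, hks.trans hsup_d⟩
  · rintro ⟨hkr, hkd⟩
    exact le_csSup hbdd ⟨hk, hkr, hkd⟩

lemma one_div_one_sub_div_eq {ε q : ℝ} (hq : q ≠ 0) :
    1 / (1 - ε / q) = q / (q - ε) := by
  field_simp

lemma one_le_one_div_one_sub_div {ε q : ℝ} (hε : 0 ≤ ε) (hεq : ε < q) :
    1 ≤ 1 / (1 - ε / q) := by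
  rw [one_div_one_sub_div_eq (by linarith), one_le_div₀ (by linarith)]
  linarith

lemma four_le_one_div_one_sub_div_iff {ε q : ℝ} (hε : 0 ≤ ε) (hεq : ε < q) :
    4 ≤ 1 / (1 - ε / q) ↔ 3 / 4 * q ≤ ε := by
  rw [one_div_one_sub_div_eq (by linarith), le_div_iff₀ (by linarith)]
  constructor <;> intro h <;> linarith

lemma two_le_M_iff {p ε : ℝ} {d : ℕ} (hε : 0 ≤ ε) (hεp : ε < 1 - p) (hd : 2 ≤ d) :
    2 ≤ M p ε d ↔ 3 / 4 * (1 - p) ≤ ε := by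
  rw [M, le_sSup_bounded_iff (Real.one_le_sqrt.mpr (one_le_one_div_one_sub_div hε hεp))
    (by omega) (by norm_num), Real.le_sqrt' (by norm_num)]
  norm_num only [Nat.cast_ofNat, four_le_one_div_one_sub_div_iff hε hεp, hd, and_true]

theorem stmt_12_general (p : ℝ) (d : ℕ) (hd : 2 ≤ d) :
    ∀ ε : ℝ, 0 ≤ ε → ε ≤ 1 → (Q p ε d > 0 ↔ ε ≥ (3 / 4) * (1 - p)) := by
  intro ε hε _
  have hd_pos : 0 < Real.log d := Real.log_pos (by exact_mod_cast hd)
  rw [Q, gt_iff_lt, ge_iff_le]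
  split_ifs with hεp
  · rw [Real.log_pos_iff (Nat.cast_nonneg _), Nat.one_lt_cast, ← two_le_M_iff hε (by linarith) hd]
    rfl
  · exact iff_of_true hd_pos (by linarith)

theorem stmt_12 (p : ℝ) (hp0 : 0 ≤ p) (hp1 : p ≤ 1) (d : ℕ) (hd : 2 ≤ d) :
    ∀ ε : ℝ, 0 ≤ ε → ε ≤ 1 → (Q p ε d > 0 ↔ ε ≥ (3 / 4) * (1 - p)) :=
  stmt_12_general p d hd
end
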